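/- arXiv:2510.20922 — 2 statements merged into one kernel-verified Lean document; each statement's English description precedes it below -/
import Mathlib

section
/- Recovery of expected posterior vulnerability through a refinement: with π, C, R, D = C;R as above, ∑_z ∑_y outer_C(y)·R(y,z)·(∑_w s^z(w) ∑_x δ^y(x)·g(w,x)) = V_g[π▷D], where for each z with outer_D(z) > 0, s^z is a fixed strategy optimal for the posterior ε^z of (π,D) given z, and V_g[π▷D] = ∑_z outer_D(z)·V_g(ε^z) is the static expected posterior vulnerability of D. -/
/-- recovery of expected posterior vulnerability through a refinement. -/
theorem stmt9
    {X Y Z W : Type} [Fintype X] [Nonempty X] [Fintype Y] [Nonempty Y]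
    [Fintype Z] [Nonempty Z] [Fintype W] [Nonempty W]
    (π : X → ℝ) (hπ0 : ∀ x, 0 ≤ π x) (hπ1 : ∑ x, π x = 1)
    (C : X → Y → ℝ) (hC0 : ∀ x y, 0 ≤ C x y) (hC1 : ∀ x, ∑ y, C x y = 1)
    (R : Y → Z → ℝ) (hR0 : ∀ y z, 0 ≤ R y z) (hR1 : ∀ y, ∑ z, R y z = 1)
    (D : X → Z → ℝ) (hD : ∀ x z, D x z = ∑ y, C x y * R y z)
    (g : W → X → ℝ)
    (s : Z → W → ℝ) (hs0 : ∀ z w, 0 ≤ s z w) (hs1 : ∀ z, ∑ w, s z w = 1)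
    (hopt : ∀ z, 0 < (∑ x, π x * D x z) → ∀ w, 0 < s z w → ∀ w',
      ∑ x, (π x * D x z / (∑ x', π x' * D x' z)) * g w' x
        ≤ ∑ x, (π x * D x z / (∑ x', π x' * D x' z)) * g w x) :
    ∑ z, ∑ y, (∑ x, π x * C x y) * R y z *
        (∑ w, s z w * ∑ x, (π x * C x y / (∑ x', π x' * C x' y)) * g w x)
      = ∑ z, (∑ x, π x * D x z) *
          Finset.sup' Finset.univ Finset.univ_nonempty
            (fun w => ∑ x, (π x * D x z / (∑ x', π x' * D x' z)) * g w x) := by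
  have hD0 : ∀ x z, 0 ≤ D x z := fun x z => by
    rw [hD]
    exact Finset.sum_nonneg fun y _ => mul_nonneg (hC0 x y) (hR0 y z)
  refine Finset.sum_congr rfl fun z _ => ?_
  -- key pointwise fact
  have key : ∀ y x, (∑ x', π x' * C x' y) * R y z * (π x * C x y / (∑ x', π x' * C x' y))
      = π x * C x y * R y z := by
    intro y x
    by_cases h : (∑ x', π x' * C x' y) = 0
    · have hz : π x * C x y = 0 :=
        (Finset.sum_eq_zero_iff_of_nonneg
          (fun x' _ => mul_nonneg (hπ0 x') (hC0 x' y))).mp h x (Finset.mem_univ x)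
      simp [h, hz]
    · field_simp
  have step1 : (∑ y, (∑ x, π x * C x y) * R y z *
        (∑ w, s z w * ∑ x, (π x * C x y / (∑ x', π x' * C x' y)) * g w x))
      = ∑ w, s z w * ∑ x, π x * D x z * g w x := by
    calc ∑ y, (∑ x, π x * C x y) * R y z *
          (∑ w, s z w * ∑ x, (π x * C x y / (∑ x', π x' * C x' y)) * g w x)
        = ∑ y, ∑ w, s z w * ∑ x, π x * C x y * R y z * g w x := by
          refine Finset.sum_congr rfl fun y _ => ?_
          rw [Finset.mul_sum]
          refine Finset.sum_congr rfl fun w _ => ?_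
          rw [mul_comm ((∑ x, π x * C x y) * R y z) (s z w * _), mul_assoc,
            Finset.sum_mul]
          congr 1
          refine Finset.sum_congr rfl fun x _ => ?_
          rw [← key y x]
          ring
      _ = ∑ w, s z w * ∑ y, ∑ x, π x * C x y * R y z * g w x := by
          rw [Finset.sum_comm]
          exact Finset.sum_congr rfl fun w _ => (Finset.mul_sum _ _ _).symm
      _ = ∑ w, s z w * ∑ x, π x * D x z * g w x := by
          refine Finset.sum_congr rfl fun w _ => ?_
          congr 1
          rw [Finset.sum_comm]
          refine Finset.sum_congr rfl fun x _ => ?_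
          rw [hD, Finset.mul_sum, Finset.sum_mul]
          exact Finset.sum_congr rfl fun y _ => by ring
  rw [step1]
  set T := ∑ x, π x * D x z with hT
  by_cases hTz : T = 0
  · have hz : ∀ x, π x * D x z = 0 := fun x =>
      (Finset.sum_eq_zero_iff_of_nonneg
        (fun x _ => mul_nonneg (hπ0 x) (hD0 x z))).mp hTz x (Finset.mem_univ x)
    have : ∀ w, ∑ x, π x * D x z * g w x = 0 := fun w =>
      Finset.sum_eq_zero fun x _ => by rw [hz x, zero_mul]
    simp [hTz, this]
  · have hTpos : 0 < T :=
      lt_of_le_of_ne (Finset.sum_nonneg fun x _ => mul_nonneg (hπ0 x) (hD0 x z))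
        (Ne.symm hTz)
    set M := Finset.sup' Finset.univ Finset.univ_nonempty
      (fun w => ∑ x, (π x * D x z / (∑ x', π x' * D x' z)) * g w x) with hM
    have hTF : ∀ w, ∑ x, π x * D x z * g w x
        = T * ∑ x, (π x * D x z / (∑ x', π x' * D x' z)) * g w x := by
      intro w
      rw [Finset.mul_sum]
      refine Finset.sum_congr rfl fun x _ => ?_
      rw [← hT]
      field_simp
    have hterm : ∀ w, s z w * ∑ x, π x * D x z * g w x = s z w * (T * M) := by
      intro w
      rcases lt_or_eq_of_le (hs0 z w) with hsw | hsw
      · have hle : (∑ x, (π x * D x z / (∑ x', π x' * D x' z)) * g w x) ≤ M :=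
          by rw [hM]; exact Finset.le_sup' (fun w => ∑ x, (π x * D x z / (∑ x', π x' * D x' z)) * g w x) (Finset.mem_univ w)
        have hge : M ≤ ∑ x, (π x * D x z / (∑ x', π x' * D x' z)) * g w x :=
          by rw [hM]; exact Finset.sup'_le _ _ fun w' _ => hopt z hTpos w hsw w'
        rw [hTF w, le_antisymm hle hge]
      · rw [← hsw]; ring
    rw [Finset.sum_congr rfl fun w _ => hterm w, ← Finset.sum_mul, hs1 z, one_mul]
end

section
/- Recovery of max-case posterior vulnerability through a refinement: with π, C, R, D = C;R as above, max over z with outer_D(z) > 0 of (1/outer_D(z)) · ∑_y outer_C(y)·R(y,z)·(∑_w s^z(w) ∑_x δ^y(x)·g(w,x)) equals the max-case posterior vulnerability max_{z : outer_D(z)>0} V_g(ε^z), where s^z is any strategy optimal for ε^z. -/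
lemma mix_eq_sup {W : Type} [Fintype W] [Nonempty W]
    (f : W → ℝ) (s : W → ℝ) (hs0 : ∀ w, 0 ≤ s w) (hs1 : ∑ w, s w = 1)
    (hopt : ∀ w, 0 < s w → ∀ w', f w' ≤ f w) :
    ∑ w, s w * f w = Finset.sup' Finset.univ Finset.univ_nonempty f := by
  obtain ⟨w0, -, hw0⟩ : ∃ w ∈ Finset.univ, 0 < s w := by
    by_contra h
    push_neg at h
    have : ∑ w, s w = 0 := Finset.sum_eq_zero (fun w hw =>
      le_antisymm (h w hw) (hs0 w))
    simp [this] at hs1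
  have hM : Finset.sup' Finset.univ Finset.univ_nonempty f = f w0 := by
    apply le_antisymm
    · exact Finset.sup'_le _ _ (fun w _ => hopt w0 hw0 w)
    · exact Finset.le_sup' f (Finset.mem_univ w0)
  rw [hM]
  have : ∑ w, s w * f w = ∑ w, s w * f w0 := by
    apply Finset.sum_congr rfl
    intro w _
    rcases lt_or_eq_of_le (hs0 w) with hw | hw
    · have h1 := hopt w hw w0
      have h2 := hopt w0 hw0 w
      rw [le_antisymm h2 h1]
    · simp [← hw]
  rw [this, ← Finset.sum_mul, hs1, one_mul]

/-- recovery of max-case posterior vulnerability through a refinement. -/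
theorem stmt10
    {X Y Z W : Type} [Fintype X] [Nonempty X] [Fintype Y] [Nonempty Y]
    [Fintype Z] [Nonempty Z] [Fintype W] [Nonempty W] [DecidableEq Z]
    (π : X → ℝ) (hπ0 : ∀ x, 0 ≤ π x) (hπ1 : ∑ x, π x = 1)
    (C : X → Y → ℝ) (hC0 : ∀ x y, 0 ≤ C x y) (hC1 : ∀ x, ∑ y, C x y = 1)
    (R : Y → Z → ℝ) (hR0 : ∀ y z, 0 ≤ R y z) (hR1 : ∀ y, ∑ z, R y z = 1)
    (D : X → Z → ℝ) (hD : ∀ x z, D x z = ∑ y, C x y * R y z)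
    (hne : (Finset.univ.filter (fun z => 0 < ∑ x, π x * D x z)).Nonempty)
    (g : W → X → ℝ)
    (s : Z → W → ℝ) (hs0 : ∀ z w, 0 ≤ s z w) (hs1 : ∀ z, ∑ w, s z w = 1)
    (hopt : ∀ z, 0 < (∑ x, π x * D x z) → ∀ w, 0 < s z w → ∀ w',
      ∑ x, (π x * D x z / (∑ x', π x' * D x' z)) * g w' x
        ≤ ∑ x, (π x * D x z / (∑ x', π x' * D x' z)) * g w x) :
    Finset.sup' (Finset.univ.filter (fun z => 0 < ∑ x, π x * D x z)) hne
        (fun z => (1 / (∑ x, π x * D x z)) *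
          ∑ y, (∑ x, π x * C x y) * R y z *
            (∑ w, s z w * ∑ x, (π x * C x y / (∑ x', π x' * C x' y)) * g w x))
      = Finset.sup' (Finset.univ.filter (fun z => 0 < ∑ x, π x * D x z)) hne
          (fun z => Finset.sup' Finset.univ Finset.univ_nonempty
            (fun w => ∑ x, (π x * D x z / (∑ x', π x' * D x' z)) * g w x)) := by
  apply Finset.sup'_congr hne rfl
  intro z hz
  rw [Finset.mem_filter] at hz
  have hDz : 0 < ∑ x, π x * D x z := hz.2
  have key : ∀ (w : W) (y : Y),
      (∑ x, π x * C x y) * R y z * ∑ x, (π x * C x y / (∑ x', π x' * C x' y)) * g w x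
        = ∑ x, π x * C x y * R y z * g w x := by
    intro w y
    by_cases hy : (∑ x, π x * C x y) = 0
    · have hz0 : ∀ x, π x * C x y = 0 := fun x =>
        (Finset.sum_eq_zero_iff_of_nonneg
          (fun x _ => mul_nonneg (hπ0 x) (hC0 x y))).mp hy x (Finset.mem_univ x)
      simp [hy, fun x => hz0 x]
    · rw [Finset.mul_sum]
      apply Finset.sum_congr rfl
      intro x _
      field_simp
  have tot : ∀ w : W,
      ∑ y, (∑ x, π x * C x y) * R y z * ∑ x, (π x * C x y / (∑ x', π x' * C x' y)) * g w x
        = ∑ x, π x * D x z * g w x := by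
    intro w
    rw [Finset.sum_congr rfl (fun y _ => key w y), Finset.sum_comm]
    apply Finset.sum_congr rfl
    intro x _
    rw [hD, Finset.mul_sum, Finset.sum_mul]
    exact Finset.sum_congr rfl fun y _ => by ring
  have swap : ∑ y, (∑ x, π x * C x y) * R y z *
      (∑ w, s z w * ∑ x, (π x * C x y / (∑ x', π x' * C x' y)) * g w x)
      = ∑ w, s z w * ∑ x, π x * D x z * g w x := by
    calc ∑ y, (∑ x, π x * C x y) * R y z *
          (∑ w, s z w * ∑ x, (π x * C x y / (∑ x', π x' * C x' y)) * g w x)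
        = ∑ y, ∑ w, s z w * ((∑ x, π x * C x y) * R y z *
            ∑ x, (π x * C x y / (∑ x', π x' * C x' y)) * g w x) := by
          refine Finset.sum_congr rfl fun y _ => ?_
          rw [Finset.mul_sum]
          exact Finset.sum_congr rfl fun w _ => by ring
      _ = ∑ w, ∑ y, s z w * ((∑ x, π x * C x y) * R y z *
            ∑ x, (π x * C x y / (∑ x', π x' * C x' y)) * g w x) := Finset.sum_comm
      _ = ∑ w, s z w * ∑ x, π x * D x z * g w x := by
          refine Finset.sum_congr rfl fun w _ => ?_
          rw [← Finset.mul_sum, tot w]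
  have lhs_eq : (1 / (∑ x, π x * D x z)) *
      ∑ y, (∑ x, π x * C x y) * R y z *
        (∑ w, s z w * ∑ x, (π x * C x y / (∑ x', π x' * C x' y)) * g w x)
      = ∑ w, s z w * ∑ x, (π x * D x z / (∑ x', π x' * D x' z)) * g w x := by
    rw [swap, Finset.mul_sum]
    refine Finset.sum_congr rfl fun w _ => ?_
    have : ∑ x, (π x * D x z / (∑ x', π x' * D x' z)) * g w x
        = (1 / (∑ x', π x' * D x' z)) * ∑ x, π x * D x z * g w x := by
      rw [Finset.mul_sum]
      exact Finset.sum_congr rfl fun x _ => by ring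
    rw [this]
    ring
  rw [lhs_eq]
  exact mix_eq_sup _ (s z) (hs0 z) (hs1 z) (fun w hw w' => hopt z hDz w hw w')
end
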